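/- Let N ≥ 2, let A be a Hermitian N×N complex matrix with τ = tr A, let v ∈ ℂ^N be a unit vector with α = ⟨v, A v⟩, and assume α > 0, τ > 0 and Nα > τ. If the Choi matrix Z_A = (1/α)·A ⊗ P + (1/(N/τ − 1/α))·(𝟙 − A/α) ⊗ (𝟙/τ − P/α) is positive semidefinite, then α·𝟙 − A is positive semidefinite. -/

import Mathlib

open Matrix Kronecker ComplexOrder

/-!
Test `Z` on product vectors `x ⊗ u` with `u ≠ 0` and `v ⬝ᵥ u = 0`, which exist because `N ≥ 2`.
Then `P *ᵥ u = 0`, so every term of `Z` containing `P` vanishes on `x ⊗ u`, leaving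
`⟨x ⊗ u, Z (x ⊗ u)⟩ = (N/τ - 1/α)⁻¹ τ⁻¹ ‖u‖² ⟨x, (1 - A/α) x⟩`. The coefficient is positive,
so `1 - A/α` is positive semidefinite, and so is `α • 1 - A = α • (1 - A/α)`.
-/

namespace Matrix

variable {m n R : Type*} [Fintype m] [Fintype n]

theorem exists_ne_zero_dotProduct_eq_zero {K : Type*} [Field K] [DecidableEq n]
    (hn : 1 < Fintype.card n) (v : n → K) : ∃ u ≠ 0, v ⬝ᵥ u = 0 := by
  have hker : LinearMap.ker (dotProductEquiv K n v) ≠ ⊥ :=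
    LinearMap.ker_ne_bot_of_finrank_lt (by simpa using hn)
  obtain ⟨u, hu, hu0⟩ := Submodule.exists_mem_ne_zero_of_ne_bot hker
  exact ⟨u, hu0, hu⟩

section CommRing

variable [CommRing R] [StarRing R]

theorem star_dotProduct_kronecker_mulVec (B : Matrix m m R) (C : Matrix n n R)
    (x : m → R) (u : n → R) :
    star (fun p : m × n => x p.1 * u p.2) ⬝ᵥ (B ⊗ₖ C) *ᵥ (fun p => x p.1 * u p.2) =
      (star x ⬝ᵥ B *ᵥ x) * (star u ⬝ᵥ C *ᵥ u) := by
  have hmulVec : (B ⊗ₖ C) *ᵥ (fun p : m × n => x p.1 * u p.2) =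
      fun p => (B *ᵥ x) p.1 * (C *ᵥ u) p.2 := by
    ext p
    simp only [mulVec, dotProduct, kroneckerMap_apply, Fintype.sum_prod_type,
      Finset.sum_mul_sum]
    exact Finset.sum_congr rfl fun k _ => Finset.sum_congr rfl fun l _ => by ring
  simp only [hmulVec, dotProduct, Pi.star_apply, star_mul', Fintype.sum_prod_type,
    Finset.sum_mul_sum]
  exact Finset.sum_congr rfl fun k _ => Finset.sum_congr rfl fun l _ => by ring

theorem PosSemidef.of_star_dotProduct_kronecker_mulVec [PartialOrder R] [PosMulReflectLE R]
    {Z : Matrix (m × n) (m × n) R} (hZ : Z.PosSemidef) {B : Matrix m m R}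
    (hB : B.IsHermitian) (u : n → R) {c : R} (hc : 0 < c)
    (h : ∀ x, star (fun p : m × n => x p.1 * u p.2) ⬝ᵥ Z *ᵥ (fun p => x p.1 * u p.2) =
      c * (star x ⬝ᵥ B *ᵥ x)) :
    B.PosSemidef :=
  .of_dotProduct_mulVec_nonneg hB fun x =>
    le_of_mul_le_mul_left (by rw [mul_zero, ← h x]; exact hZ.dotProduct_mulVec_nonneg _) hc

end CommRing

end Matrix

theorem choi_posSemidef_upper_bound_general (N : ℕ) (hN : 2 ≤ N)
    (A : Matrix (Fin N) (Fin N) ℂ) (hA : A.IsHermitian)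
    (v : Fin N → ℂ)
    (τ α : ℝ)
    (hα0 : 0 < α) (hτ0 : 0 < τ) (hNα : τ < (N : ℝ) * α)
    (P : Matrix (Fin N) (Fin N) ℂ) (hP : P = vecMulVec (star v) v)
    (Z : Matrix (Fin N × Fin N) (Fin N × Fin N) ℂ)
    (hZ : Z = ((α : ℂ))⁻¹ • (A ⊗ₖ P) +
      ((((N : ℝ) / τ - 1 / α : ℝ) : ℂ))⁻¹ •
        ((1 - ((α : ℂ))⁻¹ • A) ⊗ₖ (((τ : ℂ))⁻¹ • 1 - ((α : ℂ))⁻¹ • P)))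
    (hZpsd : Z.PosSemidef) :
    (((α : ℝ) : ℂ) • 1 - A).PosSemidef := by
  obtain ⟨u, hu0, hvu⟩ := exists_ne_zero_dotProduct_eq_zero (by rw [Fintype.card_fin]; omega) v
  have hPu : star u ⬝ᵥ P *ᵥ u = 0 := by simp [hP, vecMulVec_mulVec, hvu]
  have hd : 0 < (N : ℝ) / τ - 1 / α := by
    rw [sub_pos, div_lt_div_iff₀ hα0 hτ0]
    linarith
  have hc : (0 : ℂ) < (((((N : ℝ) / τ - 1 / α)⁻¹ * τ⁻¹ : ℝ)) : ℂ) * (star u ⬝ᵥ u) :=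
    mul_pos (by exact_mod_cast by positivity) (dotProduct_star_self_pos_iff.mpr hu0)
  have hB : (1 - ((α : ℂ))⁻¹ • A).PosSemidef := by
    refine hZpsd.of_star_dotProduct_kronecker_mulVec ?_ u hc fun x => ?_
    · exact isHermitian_one.sub (hA.smul (by simp [IsSelfAdjoint, Complex.conj_ofReal]))
    simp only [hZ, add_mulVec, smul_mulVec, dotProduct_add, dotProduct_smul,
      star_dotProduct_kronecker_mulVec, sub_mulVec, one_mulVec, dotProduct_sub, hPu]
    push_cast
    ring
  have hrescale : ((α : ℂ)) • (1 - ((α : ℂ))⁻¹ • A) = ((α : ℝ) : ℂ) • 1 - A := by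
    rw [smul_sub, smul_smul, mul_inv_cancel₀ (by exact_mod_cast hα0.ne'), one_smul]
  exact hrescale ▸ hB.smul (by exact_mod_cast hα0.le)

/-- If the Choi matrix `Z_A` is positive semidefinite then
`α·𝟙 − A` is positive semidefinite. -/
theorem choi_posSemidef_upper_bound (N : ℕ) (hN : 2 ≤ N)
    (A : Matrix (Fin N) (Fin N) ℂ) (hA : A.IsHermitian)
    (v : Fin N → ℂ) (hv : star v ⬝ᵥ v = 1)
    (τ α : ℝ) (hτ : A.trace = (τ : ℂ)) (hα : star v ⬝ᵥ A.mulVec v = (α : ℂ))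
    (hα0 : 0 < α) (hτ0 : 0 < τ) (hNα : τ < (N : ℝ) * α)
    (P : Matrix (Fin N) (Fin N) ℂ) (hP : P = vecMulVec (star v) v)
    (Z : Matrix (Fin N × Fin N) (Fin N × Fin N) ℂ)
    (hZ : Z = ((α : ℂ))⁻¹ • (A ⊗ₖ P) +
      ((((N : ℝ) / τ - 1 / α : ℝ) : ℂ))⁻¹ •
        ((1 - ((α : ℂ))⁻¹ • A) ⊗ₖ (((τ : ℂ))⁻¹ • 1 - ((α : ℂ))⁻¹ • P)))
    (hZpsd : Z.PosSemidef) :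
    (((α : ℝ) : ℂ) • 1 - A).PosSemidef :=
  choi_posSemidef_upper_bound_general N hN A hA v τ α hα0 hτ0 hNα P hP Z hZ hZpsd
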